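/- Let Φ = (Φ^1,…,Φ^N) ∈ K̃^N be a Miura-type transformation from the equation ∂_t(v) = G to the equation ∂_t(u) = F, and let σ be the substitution homomorphism determined by σ(λ) = λ and σ(u^γ_ℓ) = S̃^ℓ(Φ^γ), assumed well defined on all matrix entries involved. Then σ ∘ S = S̃ ∘ σ and σ ∘ D_t = D̃_t ∘ σ on these entries; consequently, if (M, U) is a matrix Lax representation for ∂_t(u) = F and det(σ(M)) ≠ 0, then (σ(M), σ(U)) is a matrix Lax representation for ∂_t(v) = G. -/

import Mathlib

/-!
Setup: `KK N` is the field of rational functions over `ℂ` in the commuting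
variables `λ` (here `lam N`) and `u^γ_ℓ` (here `uu N γ ℓ`, `γ : Fin N`, `ℓ : ℤ`),
realized as the fraction field of the multivariate polynomial ring.
`SS N` is the shift automorphism `S` (fixing `ℂ` and `λ`, sending `u^γ_ℓ` to
`u^γ_{ℓ+1}`), and `Sz N ℓ = S^ℓ`.
-/

set_option maxHeartbeats 1000000

noncomputable section

open MvPolynomial

abbrev RR (N : ℕ) : Type := MvPolynomial (Option (Fin N × ℤ)) ℂ
abbrev KK (N : ℕ) : Type := FractionRing (RR N)

def lam (N : ℕ) : KK N := algebraMap (RR N) (KK N) (X none)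
def uu (N : ℕ) (γ : Fin N) (ℓ : ℤ) : KK N := algebraMap (RR N) (KK N) (X (some (γ, ℓ)))

def shiftIdx (N : ℕ) : Option (Fin N × ℤ) ≃ Option (Fin N × ℤ) :=
  Equiv.optionCongr ((Equiv.refl (Fin N)).prodCongr (Equiv.addRight (1:ℤ)))

/-- The shift on polynomials: `λ ↦ λ`, `u^γ_ℓ ↦ u^γ_{ℓ+1}`. -/
def shiftR (N : ℕ) : RR N ≃+* RR N := (renameEquiv ℂ (shiftIdx N)).toRingEquiv

/-- The shift automorphism `S` of the field `KK N`. -/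
def SS (N : ℕ) : RingAut (KK N) := IsFractionRing.ringEquivOfRingEquiv (shiftR N)

/-- `Sz N ℓ = S^ℓ`. -/
def Sz (N : ℕ) (ℓ : ℤ) : KK N ≃+* KK N := SS N ^ ℓ

/-- The subfield of elements that are rational functions of `λ` and the
variables `u^γ_ℓ` with `ℓ ∈ s` only. -/
def depOn (N : ℕ) (s : Set ℤ) : Subfield (KK N) :=
  Subfield.closure (Set.range (algebraMap ℂ (KK N)) ∪ {lam N} ∪
    {x | ∃ γ : Fin N, ∃ ℓ ∈ s, x = uu N γ ℓ})

/-- The substitution homomorphism `σ` (on polynomials) determined by a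
Miura-type transformation `Φ`: `λ ↦ λ`, `u^γ_ℓ ↦ S^ℓ(Φ^γ)`. -/
def mtSubst (N : ℕ) (Φ : Fin N → KK N) : RR N →+* KK N :=
  (aeval (fun i : Option (Fin N × ℤ) =>
    match i with
    | none => lam N
    | some (γ, ℓ) => Sz N ℓ (Φ γ))).toRingHom

/-- `SubstRel N Φ x y` : `σ` is well defined at the rational function `x`
(i.e. `x = p/q` with `σ(q) ≠ 0`) and `σ(x) = y`. -/
def SubstRel (N : ℕ) (Φ : Fin N → KK N) (x y : KK N) : Prop :=
  ∃ p q : RR N, mtSubst N Φ q ≠ 0 ∧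
    x * algebraMap (RR N) (KK N) q = algebraMap (RR N) (KK N) p ∧
    y * mtSubst N Φ q = mtSubst N Φ p

/-!
On its domain the substitution `σ`, `p / q ↦ σ(p) / σ(q)`, is single-valued and respects the
field operations, and by the quotient rule a derivation of a fraction field is determined by
its values on polynomials. So both identities reduce to the generators: `σ ∘ S = S ∘ σ` is
immediate there, and on `u^γ_ℓ`
  `σ(D_t u^γ_ℓ) = S^ℓ σ(F^γ) = S^ℓ D̃_t(Φ^γ) = D̃_t σ(u^γ_ℓ)`
by the Miura property and because a total derivative commutes with `S`. Applying `σ`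
entrywise to `D_t M = S(U) M - M U` then gives the Lax equation for `(σ M, σ U)`.
-/

theorem RingAut.semiconj_zpow {A B : Type*} [Semiring A] [Semiring B] {g : A → B}
    {e : RingAut A} {e' : RingAut B} (h : Function.Semiconj g e e') (n : ℤ) :
    Function.Semiconj g ⇑(e ^ n) ⇑(e' ^ n) := by
  have h_inv : Function.Semiconj g ⇑e⁻¹ ⇑e'⁻¹ := fun x => by
    rw [RingAut.inv_apply, RingAut.inv_apply, RingEquiv.eq_symm_apply, ← h,
      RingEquiv.apply_symm_apply]
  induction n using Int.induction_on with
  | zero => exact fun x => rfl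
  | succ n ih =>
    simp only [zpow_add_one]
    exact fun x => by rw [RingAut.mul_apply, RingAut.mul_apply, ih, h]
  | pred n ih =>
    simp only [zpow_sub_one]
    exact fun x => by rw [RingAut.mul_apply, RingAut.mul_apply, ih, h_inv]

theorem Derivation.apply_ringHom_comm_of_isFractionRing {k R K : Type*} [CommRing k]
    [CommRing R] [Field K] [Algebra R K] [IsFractionRing R K] [Algebra k K]
    (D : Derivation k K K) (e : K →+* K)
    (h : ∀ r : R, D (e (algebraMap R K r)) = e (D (algebraMap R K r))) (x : K) :
    D (e x) = e (D x) := by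
  obtain ⟨p, q, -, rfl⟩ := IsFractionRing.div_surjective (A := R) x
  simp only [map_div₀, leibniz_div, h, smul_eq_mul, map_mul, map_sub, map_pow, map_inv₀]

section FracSubst

variable {R K L : Type*} [CommRing R] [Field K] [Algebra R K] [Field L]

/-- `f` extends to `x = p / q ∈ Frac R` (with `f q ≠ 0`) and sends it to `y = f p / f q`;
`SubstRel N Φ` is this relation for `f = mtSubst N Φ`. -/
def FracSubst (f : R →+* L) (x : K) (y : L) : Prop :=
  ∃ p q : R, f q ≠ 0 ∧ x * algebraMap R K q = algebraMap R K p ∧ y * f q = f p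

namespace FracSubst

variable {f : R →+* L} {x x' : K} {y y' : L}

theorem of_algebraMap (f : R →+* L) (r : R) : FracSubst f (algebraMap R K r) (f r) :=
  ⟨r, 1, by simp, by simp, by simp⟩

theorem zero : FracSubst f (0 : K) (0 : L) := by
  simpa using of_algebraMap (K := K) f 0

theorem add (h : FracSubst f x y) (h' : FracSubst f x' y') : FracSubst f (x + x') (y + y') := by
  obtain ⟨p, q, hq, hx, hy⟩ := h
  obtain ⟨p', q', hq', hx', hy'⟩ := h'
  refine ⟨p * q' + p' * q, q * q', by simp [hq, hq'], ?_, ?_⟩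
  · rw [map_add, map_mul, map_mul, map_mul, ← hx, ← hx']; ring
  · rw [map_add, map_mul, map_mul, map_mul, ← hy, ← hy']; ring

theorem sub (h : FracSubst f x y) (h' : FracSubst f x' y') : FracSubst f (x - x') (y - y') := by
  obtain ⟨p, q, hq, hx, hy⟩ := h
  obtain ⟨p', q', hq', hx', hy'⟩ := h'
  refine ⟨p * q' - p' * q, q * q', by simp [hq, hq'], ?_, ?_⟩
  · rw [map_sub, map_mul, map_mul, map_mul, ← hx, ← hx']; ring
  · rw [map_sub, map_mul, map_mul, map_mul, ← hy, ← hy']; ring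

theorem mul (h : FracSubst f x y) (h' : FracSubst f x' y') : FracSubst f (x * x') (y * y') := by
  obtain ⟨p, q, hq, hx, hy⟩ := h
  obtain ⟨p', q', hq', hx', hy'⟩ := h'
  refine ⟨p * p', q * q', by simp [hq, hq'], ?_, ?_⟩
  · rw [map_mul, map_mul, ← hx, ← hx']; ring
  · rw [map_mul, map_mul, ← hy, ← hy']; ring

theorem sum {ι : Type*} (s : Finset ι) {g : ι → K} {g' : ι → L}
    (h : ∀ i ∈ s, FracSubst f (g i) (g' i)) :
    FracSubst f (∑ i ∈ s, g i) (∑ i ∈ s, g' i) := by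
  classical
  induction s using Finset.induction_on with
  | empty => simpa using zero
  | insert a s ha ih =>
    rw [Finset.sum_insert ha, Finset.sum_insert ha]
    exact (h a (Finset.mem_insert_self a s)).add
      (ih fun i hi => h i (Finset.mem_insert_of_mem hi))

theorem inv [IsFractionRing R K] (h : FracSubst f x y) (hy0 : y ≠ 0) :
    FracSubst f x⁻¹ y⁻¹ := by
  obtain ⟨p, q, hq, hx, hy⟩ := h
  have hp : f p ≠ 0 := hy ▸ mul_ne_zero hy0 hq
  have hx0 : x ≠ 0 := by
    rintro rfl
    rw [zero_mul, eq_comm, IsFractionRing.to_map_eq_zero_iff] at hx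
    exact hp (by rw [hx, map_zero])
  refine ⟨q, p, hp, ?_, ?_⟩
  · rw [← hx, inv_mul_cancel_left₀ hx0]
  · rw [← hy, inv_mul_cancel_left₀ hy0]

theorem unique [IsFractionRing R K] (h : FracSubst f x y) (h' : FracSubst f x y') : y = y' := by
  obtain ⟨p, q, hq, hx, hy⟩ := h
  obtain ⟨p', q', hq', hx', hy'⟩ := h'
  have hcross : p * q' = p' * q := IsFractionRing.injective R K <| by
    rw [map_mul, map_mul, ← hx, ← hx']; ring
  apply mul_right_cancel₀ (mul_ne_zero hq hq')
  calc y * (f q * f q') = f p * f q' := by rw [← hy]; ring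
    _ = f p' * f q := by rw [← map_mul, ← map_mul, hcross]
    _ = y' * (f q * f q') := by rw [← hy']; ring

theorem map (eR : R →+* R) (eK : K →+* K) (eL : L →+* L)
    (hK : ∀ r, algebraMap R K (eR r) = eK (algebraMap R K r)) (hL : ∀ r, f (eR r) = eL (f r))
    (h : FracSubst f x y) : FracSubst f (eK x) (eL y) := by
  obtain ⟨p, q, hq, hx, hy⟩ := h
  refine ⟨eR p, eR q, by rwa [hL, map_ne_zero], ?_, ?_⟩
  · rw [hK, hK, ← map_mul, hx]
  · rw [hL, hL, ← map_mul, hy]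

theorem derivation {k : Type*} [CommRing k] [Algebra k K] [Algebra k L] [IsFractionRing R K]
    {D : Derivation k K K} {D' : Derivation k L L}
    (hD : ∀ r, FracSubst f (D (algebraMap R K r)) (D' (f r))) (h : FracSubst f x y) :
    FracSubst f (D x) (D' y) := by
  obtain ⟨p, q, hq, hx, hy⟩ := h
  have hq0 : algebraMap R K q ≠ 0 := fun h0 => hq <| by
    rw [IsFractionRing.to_map_eq_zero_iff.mp h0, map_zero]
  rw [eq_div_of_mul_eq hq0 hx, eq_div_of_mul_eq hq hy, Derivation.leibniz_div,
    Derivation.leibniz_div]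
  simp only [smul_eq_mul, sq]
  have hq' := (of_algebraMap (K := K) f q).inv hq
  exact (hq'.mul hq').mul
    (((of_algebraMap f q).mul (hD p)).sub ((of_algebraMap f p).mul (hD q)))

theorem matrix_mul {m n o : Type*} [Fintype n] {A : Matrix m n K} {A' : Matrix m n L}
    {B : Matrix n o K} {B' : Matrix n o L} (hA : ∀ i j, FracSubst f (A i j) (A' i j))
    (hB : ∀ i j, FracSubst f (B i j) (B' i j)) (i : m) (j : o) :
    FracSubst f ((A * B) i j) ((A' * B') i j) :=
  sum _ fun k _ => (hA i k).mul (hB k j)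

end FracSubst

end FracSubst

section Shift

variable {N : ℕ}

theorem algebraMap_shiftR (r : RR N) :
    algebraMap (RR N) (KK N) (shiftR N r) = SS N (algebraMap (RR N) (KK N) r) :=
  (IsFractionRing.ringEquivOfRingEquiv_algebraMap (shiftR N) r).symm

theorem algebraMap_C (c : ℂ) :
    algebraMap (RR N) (KK N) (C c) = algebraMap ℂ (KK N) c := by
  rw [← MvPolynomial.algebraMap_eq, ← IsScalarTower.algebraMap_apply]

theorem SS_algebraMap_complex (c : ℂ) :
    SS N (algebraMap ℂ (KK N) c) = algebraMap ℂ (KK N) c := by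
  rw [← algebraMap_C, ← algebraMap_shiftR]
  simp [shiftR]

theorem SS_lam : SS N (lam N) = lam N := by
  rw [lam, ← algebraMap_shiftR]
  simp [shiftR, shiftIdx]

theorem SS_uu (γ : Fin N) (ℓ : ℤ) : SS N (uu N γ ℓ) = uu N γ (ℓ + 1) := by
  rw [uu, ← algebraMap_shiftR]
  simp [shiftR, shiftIdx, uu]

theorem Sz_add_one_apply (ℓ : ℤ) (x : KK N) : Sz N (ℓ + 1) x = SS N (Sz N ℓ x) := by
  rw [Sz, add_comm, zpow_add, zpow_one]
  rfl

theorem mtSubst_shiftR (Φ : Fin N → KK N) (r : RR N) :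
    mtSubst N Φ (shiftR N r) = SS N (mtSubst N Φ r) := by
  suffices (mtSubst N Φ).comp (shiftR N : RR N →+* RR N) = (SS N : KK N →+* KK N).comp
      (mtSubst N Φ) from RingHom.congr_fun this r
  refine MvPolynomial.ringHom_ext (fun c => ?_) fun i => ?_
  · simpa [shiftR, mtSubst] using (SS_algebraMap_complex c).symm
  · rcases i with _ | ⟨γ, ℓ⟩
    · simpa [shiftR, shiftIdx, mtSubst] using SS_lam.symm
    · simpa [shiftR, shiftIdx, mtSubst] using Sz_add_one_apply ℓ (Φ γ)

theorem SubstRel.map_Sz {Φ : Fin N → KK N} {x y : KK N} (ℓ : ℤ) (h : SubstRel N Φ x y) :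
    SubstRel N Φ (Sz N ℓ x) (Sz N ℓ y) := by
  have compat_algebraMap : ∀ r, algebraMap (RR N) (KK N) ((shiftR N ^ ℓ) r) =
      Sz N ℓ (algebraMap (RR N) (KK N) r) := RingAut.semiconj_zpow algebraMap_shiftR ℓ
  have compat_mtSubst : ∀ r, mtSubst N Φ ((shiftR N ^ ℓ) r) = Sz N ℓ (mtSubst N Φ r) :=
    RingAut.semiconj_zpow (mtSubst_shiftR Φ) ℓ
  exact FracSubst.map (shiftR N ^ ℓ).toRingHom (Sz N ℓ).toRingHom (Sz N ℓ).toRingHom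
    compat_algebraMap compat_mtSubst h

end Shift

section TotalDerivative

variable {N : ℕ}

def IsTotalDerivative (G : Fin N → KK N) (D : Derivation ℂ (KK N) (KK N)) : Prop :=
  D (lam N) = 0 ∧ ∀ γ ℓ, D (uu N γ ℓ) = Sz N ℓ (G γ)

namespace IsTotalDerivative

variable {G : Fin N → KK N} {D : Derivation ℂ (KK N) (KK N)}

theorem comm_SS_algebraMap (hD : IsTotalDerivative G D) (r : RR N) :
    D (SS N (algebraMap (RR N) (KK N) r)) = SS N (D (algebraMap (RR N) (KK N) r)) := by
  induction r using MvPolynomial.induction_on with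
  | C c =>
    rw [algebraMap_C, SS_algebraMap_complex, D.map_algebraMap, map_zero]
  | add p q hp hq => simp only [map_add, hp, hq]
  | mul_X p i hp =>
    have hX : D (SS N (algebraMap (RR N) (KK N) (X i))) =
        SS N (D (algebraMap (RR N) (KK N) (X i))) := by
      rcases i with _ | ⟨γ, ℓ⟩
      · rw [← lam, SS_lam, hD.1, map_zero]
      · rw [← uu, SS_uu, hD.2, hD.2, Sz_add_one_apply]
    simp only [map_mul, Derivation.leibniz, smul_eq_mul, map_add, hp, hX]

theorem comm_Sz (hD : IsTotalDerivative G D) (ℓ : ℤ) (x : KK N) :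
    D (Sz N ℓ x) = Sz N ℓ (D x) :=
  RingAut.semiconj_zpow (D.apply_ringHom_comm_of_isFractionRing (SS N : KK N →+* KK N)
    hD.comm_SS_algebraMap) ℓ x

end IsTotalDerivative

end TotalDerivative

section Miura

variable {N : ℕ} {Φ F G : Fin N → KK N} {Dt Dtt : Derivation ℂ (KK N) (KK N)}

theorem SubstRel.totalDerivative_algebraMap (hF : IsTotalDerivative F Dt)
    (hG : IsTotalDerivative G Dtt) (hMT : ∀ i, SubstRel N Φ (F i) (Dtt (Φ i))) (r : RR N) :
    SubstRel N Φ (Dt (algebraMap (RR N) (KK N) r)) (Dtt (mtSubst N Φ r)) := by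
  induction r using MvPolynomial.induction_on with
  | C c =>
    have hσ : mtSubst N Φ (C c) = algebraMap ℂ (KK N) c := aeval_C _ c
    rw [algebraMap_C, hσ, Dt.map_algebraMap, Dtt.map_algebraMap]
    exact FracSubst.zero
  | add p q hp hq =>
    simp only [map_add]
    exact FracSubst.add hp hq
  | mul_X p i hp =>
    have hX : SubstRel N Φ (Dt (algebraMap (RR N) (KK N) (X i))) (Dtt (mtSubst N Φ (X i))) := by
      rcases i with _ | ⟨γ, ℓ⟩
      · have hσ : mtSubst N Φ (X none) = lam N := aeval_X _ _
        rw [← lam, hσ, hF.1, hG.1]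
        exact FracSubst.zero
      · have hσ : mtSubst N Φ (X (some (γ, ℓ))) = Sz N ℓ (Φ γ) := aeval_X _ _
        rw [← uu, hσ, hF.2, hG.comm_Sz]
        exact (hMT γ).map_Sz ℓ
    simp only [map_mul, Derivation.leibniz, smul_eq_mul]
    exact ((FracSubst.of_algebraMap _ p).mul hX).add ((FracSubst.of_algebraMap _ (X i)).mul hp)

theorem SubstRel.totalDerivative (hF : IsTotalDerivative F Dt) (hG : IsTotalDerivative G Dtt)
    (hMT : ∀ i, SubstRel N Φ (F i) (Dtt (Φ i))) {x y : KK N} (h : SubstRel N Φ x y) :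
    SubstRel N Φ (Dt x) (Dtt y) :=
  FracSubst.derivation (totalDerivative_algebraMap hF hG hMT) h

end Miura

/-- The field `K̃` of the second equation is realized by the same concrete field `KK N`, with
`S̃ = S`; `Dtt` is the total derivative of `∂ₜ(v) = G`. -/
theorem statement9_general (N d : ℕ)
    (F : Fin N → KK N)
    (G : Fin N → KK N)
    -- the total derivative `D_t` of `∂ₜ(u) = F`:
    (Dt : Derivation ℂ (KK N) (KK N)) (hDtlam : Dt (lam N) = 0)
    (hDtu : ∀ γ ℓ, Dt (uu N γ ℓ) = Sz N ℓ (F γ))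
    -- the total derivative `D̃_t` of `∂ₜ(v) = G`:
    (Dtt : Derivation ℂ (KK N) (KK N)) (hDttlam : Dtt (lam N) = 0)
    (hDttu : ∀ γ ℓ, Dtt (uu N γ ℓ) = Sz N ℓ (G γ))
    -- `Φ` is a Miura-type transformation from `∂ₜ(v) = G` to `∂ₜ(u) = F`:
    (Φ : Fin N → KK N)
    (hMT : ∀ i, SubstRel N Φ (F i) (Dtt (Φ i)))
    -- an MLR `(M, U)` for `∂ₜ(u) = F`:
    (M U : Matrix (Fin d) (Fin d) (KK N))
    (hLax : M.map ⇑Dt = U.map ⇑(Sz N 1) * M - M * U)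
    -- `σ` is well defined on all entries of `M` and `U`, with values `Ms`, `Us`:
    (Ms Us : Matrix (Fin d) (Fin d) (KK N))
    (hMs : ∀ p q, SubstRel N Φ (M p q) (Ms p q))
    (hUs : ∀ p q, SubstRel N Φ (U p q) (Us p q)) :
    -- `σ ∘ S = S̃ ∘ σ` on the entries of `M` and `U`:
    (∀ p q, SubstRel N Φ (Sz N 1 (M p q)) (Sz N 1 (Ms p q)) ∧
      SubstRel N Φ (Sz N 1 (U p q)) (Sz N 1 (Us p q))) ∧
    -- `σ ∘ D_t = D̃_t ∘ σ` on the entries of `M` and `U`: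
    (∀ p q, SubstRel N Φ (Dt (M p q)) (Dtt (Ms p q)) ∧
      SubstRel N Φ (Dt (U p q)) (Dtt (Us p q))) ∧
    -- `(σ(M), σ(U))` is an MLR for `∂ₜ(v) = G`:
    Ms.map ⇑Dtt = Us.map ⇑(Sz N 1) * Ms - Ms * Us := by
  have hF : IsTotalDerivative F Dt := ⟨hDtlam, hDtu⟩
  have hG : IsTotalDerivative G Dtt := ⟨hDttlam, hDttu⟩
  have hShift : ∀ p q, SubstRel N Φ (U.map (Sz N 1) p q) (Us.map (Sz N 1) p q) :=
    fun p q => (hUs p q).map_Sz 1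
  have hDeriv : ∀ p q, SubstRel N Φ (M.map Dt p q) (Ms.map Dtt p q) :=
    fun p q => (hMs p q).totalDerivative hF hG hMT
  refine ⟨fun p q => ⟨(hMs p q).map_Sz 1, hShift p q⟩, fun p q =>
    ⟨hDeriv p q, (hUs p q).totalDerivative hF hG hMT⟩, ?_⟩
  ext p q
  have hRHS : SubstRel N Φ ((U.map (Sz N 1) * M - M * U) p q)
      ((Us.map (Sz N 1) * Ms - Ms * Us) p q) :=
    (FracSubst.matrix_mul hShift hMs p q).sub (FracSubst.matrix_mul hMs hUs p q)
  rw [← hLax] at hRHS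
  exact FracSubst.unique (hDeriv p q) hRHS

/-- if `Φ` is a Miura-type transformation from `∂ₜ(v) = G` to
`∂ₜ(u) = F` and `σ` is the substitution homomorphism determined by
`σ(λ) = λ`, `σ(u^γ_ℓ) = S̃^ℓ(Φ^γ)` (assumed well defined on all matrix entries
involved), then `σ∘S = S̃∘σ` and `σ∘D_t = D̃_t∘σ` on these entries;
consequently, if `(M, U)` is an MLR for `∂ₜ(u) = F` and `det(σ(M)) ≠ 0`, then
`(σ(M), σ(U))` is an MLR for `∂ₜ(v) = G`.  (Here the field of rational
functions in `λ` and the variables `v^γ_ℓ` is realized by the same concrete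
field `KK N`, with `S̃ = S` and with `D̃t` the total derivative of the second
equation.) -/
theorem statement9 (N d : ℕ) (hN : 0 < N) (hd : 0 < d)
    (a b ta tb : ℤ) (hab : a ≤ b) (htab : ta ≤ tb)
    (F : Fin N → KK N) (hF : ∀ γ, F γ ∈ depOn N (Set.Icc a b))
    (G : Fin N → KK N) (hG : ∀ γ, G γ ∈ depOn N (Set.Icc ta tb))
    -- the total derivative `D_t` of `∂ₜ(u) = F`:
    (Dt : Derivation ℂ (KK N) (KK N)) (hDtlam : Dt (lam N) = 0)
    (hDtu : ∀ γ ℓ, Dt (uu N γ ℓ) = Sz N ℓ (F γ))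
    -- the total derivative `D̃_t` of `∂ₜ(v) = G`:
    (Dtt : Derivation ℂ (KK N) (KK N)) (hDttlam : Dtt (lam N) = 0)
    (hDttu : ∀ γ ℓ, Dtt (uu N γ ℓ) = Sz N ℓ (G γ))
    -- `Φ` is a Miura-type transformation from `∂ₜ(v) = G` to `∂ₜ(u) = F`:
    (Φ : Fin N → KK N)
    (hMT : ∀ i, SubstRel N Φ (F i) (Dtt (Φ i)))
    -- an MLR `(M, U)` for `∂ₜ(u) = F`:
    (M U : Matrix (Fin d) (Fin d) (KK N))
    (hMdet : M.det ≠ 0)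
    (hLax : M.map ⇑Dt = U.map ⇑(Sz N 1) * M - M * U)
    -- `σ` is well defined on all entries of `M` and `U`, with values `Ms`, `Us`:
    (Ms Us : Matrix (Fin d) (Fin d) (KK N))
    (hMs : ∀ p q, SubstRel N Φ (M p q) (Ms p q))
    (hUs : ∀ p q, SubstRel N Φ (U p q) (Us p q))
    (hMsdet : Ms.det ≠ 0) :
    -- `σ ∘ S = S̃ ∘ σ` on the entries of `M` and `U`:
    (∀ p q, SubstRel N Φ (Sz N 1 (M p q)) (Sz N 1 (Ms p q)) ∧
      SubstRel N Φ (Sz N 1 (U p q)) (Sz N 1 (Us p q))) ∧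
    -- `σ ∘ D_t = D̃_t ∘ σ` on the entries of `M` and `U`:
    (∀ p q, SubstRel N Φ (Dt (M p q)) (Dtt (Ms p q)) ∧
      SubstRel N Φ (Dt (U p q)) (Dtt (Us p q))) ∧
    -- `(σ(M), σ(U))` is an MLR for `∂ₜ(v) = G`:
    Ms.map ⇑Dtt = Us.map ⇑(Sz N 1) * Ms - Ms * Us :=
  statement9_general N d F G Dt hDtlam hDtu Dtt hDttlam hDttu Φ hMT M U hLax Ms Us hMs hUs
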